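/- arXiv:2405.08652 — 2 statements merged into one kernel-verified Lean document; each statement's English description precedes it below -/
import Mathlib

section
/- Let d ≥ 2 be an integer, 1 < α < 2, 0 < ε < α − 1, κ > 0, and t₀ ∈ ℝ. Define b : ℝ^{d+1} → [0,∞] by b(t,x) := κ |t − t₀|^{−(α−1)/α} for t ≠ t₀ (any value at t = t₀). Then there exists a constant c ∈ (0,∞), depending only on α and ε, such that ‖b^{1/(α−1)}‖_{E_{1+ε}} = c · κ^{1/(α−1)}. In particular, the parabolic Morrey norm ‖b^{1/(α−1)}‖_{E_{1+ε}} is finite and proportional to κ^{1/(α−1)}. -/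
open MeasureTheory ENNReal Set Filter

noncomputable section

/-- The spatial space `ℝ^d`. -/
abbrev Spc (d : ℕ) := EuclideanSpace ℝ (Fin d)

/-- Parabolic cylinder `C_ρ(t,x) = {(s,y) : t ≤ s ≤ t + ρ^α, |y - x| ≤ ρ}`. -/
def cylP (d : ℕ) (α ρ t : ℝ) (x : Spc d) : Set (ℝ × Spc d) :=
  {p | t ≤ p.1 ∧ p.1 ≤ t + ρ ^ α ∧ dist p.2 x ≤ ρ}

/-- Average of `f` over the parabolic cylinder `C_ρ(t,x)`. -/
def cylAvg (d : ℕ) (α ρ t : ℝ) (x : Spc d) (f : ℝ × Spc d → ℝ≥0∞) : ℝ≥0∞ :=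
  (volume (cylP d α ρ t x))⁻¹ * ∫⁻ p in cylP d α ρ t x, f p

/-- Parabolic Morrey norm `‖v‖_{E_q}`. -/
def morreyE (d : ℕ) (α q : ℝ) (v : ℝ × Spc d → ℝ≥0∞) : ℝ≥0∞ :=
  ⨆ (ρ : ℝ) (_ : 0 < ρ) (t : ℝ) (x : Spc d),
    ENNReal.ofReal ρ * (cylAvg d α ρ t x (fun p => v p ^ q)) ^ (1 / q)

/-- Elliptic Morrey norm `‖w‖_{M_q}` on `ℝ^d`. -/
def morreyM (d : ℕ) (q : ℝ) (w : Spc d → ℝ≥0∞) : ℝ≥0∞ :=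
  ⨆ (ρ : ℝ) (_ : 0 < ρ) (x : Spc d),
    ENNReal.ofReal ρ *
      ((volume (Metric.closedBall x ρ))⁻¹ *
        ∫⁻ y in Metric.closedBall x ρ, w y ^ q) ^ (1 / q)

/-- Fractional (parabolic) maximal function `M_β f(t,x)`. -/
def maxFun (d : ℕ) (α β : ℝ) (f : ℝ × Spc d → ℝ≥0∞) (t : ℝ) (x : Spc d) : ℝ≥0∞ :=
  ⨆ (ρ : ℝ) (_ : 0 < ρ), ENNReal.ofReal (ρ ^ β) * cylAvg d α ρ t x f

/-- Uncentered parabolic maximal function `M̂ f(z)`, sup over all parabolic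
cylinders containing `z`. -/
def hatM (d : ℕ) (α : ℝ) (f : ℝ × Spc d → ℝ≥0∞) (z : ℝ × Spc d) : ℝ≥0∞ :=
  ⨆ (ρ : ℝ) (_ : 0 < ρ) (t : ℝ) (x : Spc d) (_ : z ∈ cylP d α ρ t x),
    cylAvg d α ρ t x f

/-- The kernel `p_γ(s,y) = 1_{s>0} s^{γ/2} min(|y|^{-d-α}, s^{-(d+α)/α})`. -/
def pKer (d : ℕ) (α γ : ℝ) (s : ℝ) (y : Spc d) : ℝ≥0∞ :=
  if 0 < s then
    (if s ^ (1 / α) ≤ ‖y‖ then ENNReal.ofReal (s ^ (γ / 2) * ‖y‖ ^ (-(d : ℝ) - α))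
     else ENNReal.ofReal (s ^ (γ / 2 - ((d : ℝ) + α) / α)))
  else 0

/-- `P_γ f(t,x) = ∫ p_γ(s,y) f(t+s, x+y) dy ds`. -/
def Pop (d : ℕ) (α γ : ℝ) (f : ℝ × Spc d → ℝ≥0∞) (t : ℝ) (x : Spc d) : ℝ≥0∞ :=
  ∫⁻ p : ℝ × Spc d, pKer d α γ p.1 p.2 * f (t + p.1, x + p.2)

/-- `P*_γ f(t,x) = ∫ p_γ(s,y) f(t-s, x+y) dy ds`. -/
def PopStar (d : ℕ) (α γ : ℝ) (f : ℝ × Spc d → ℝ≥0∞) (t : ℝ) (x : Spc d) : ℝ≥0∞ :=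
  ∫⁻ p : ℝ × Spc d, pKer d α γ p.1 p.2 * f (t - p.1, x + p.2)


/-! Raised to the power `q = 1 + ε`, the integrand is `K^q |t - t₀|^{-p}` with `K = κ^{1/(α-1)}` and
`p = q/α ∈ (0,1)`. It depends on time only, so the average over `C_ρ(t,x)` is
`ρ^{-α} K^q ∫ |s|^{-p} ds` over a time window of length `L = ρ^α`. Since `|s|^{-p}` is even and
decreasing in `|s|`, the window centred at `0` carries the largest integral, namely
`L^{1-p} ∫_{-1/2}^{1/2} |s|^{-p} ds`; and `α p = q` makes `ρ (ρ^{-α} L^{1-p})^{1/q} = 1`. So every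
term of the supremum is at most `c K` with `c = (∫_{-1/2}^{1/2} |s|^{-p} ds)^{1/q}`, and the
cylinders centred in time at `t₀` attain it. -/

open intervalIntegral

section WindowIntegral

variable {p : ℝ}

theorem intervalIntegrable_abs_rpow_neg (hp : p < 1) (a b : ℝ) :
    IntervalIntegrable (fun s => |s| ^ (-p)) volume a b := by
  have from_zero_of_nonneg : ∀ c, 0 ≤ c → IntervalIntegrable (fun s => |s| ^ (-p)) volume 0 c :=
    fun c hc => (intervalIntegrable_rpow' (r := -p) (by linarith)).congr fun s hs => by
      rw [uIoc_of_le hc] at hs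
      simp only [abs_of_pos hs.1]
  have from_zero : ∀ c, IntervalIntegrable (fun s => |s| ^ (-p)) volume 0 c := by
    intro c
    rcases le_total 0 c with hc | hc
    · exact from_zero_of_nonneg c hc
    · rw [IntervalIntegrable.iff_comp_neg]
      simpa only [abs_neg, neg_zero] using from_zero_of_nonneg (-c) (neg_nonneg.2 hc)
  exact (from_zero a).symm.trans (from_zero b)

theorem integral_abs_rpow_neg_of_nonneg (hp : p < 1) {a b : ℝ} (ha : 0 ≤ a) (hab : a ≤ b) :
    ∫ s in a..b, |s| ^ (-p) = (b ^ (1 - p) - a ^ (1 - p)) / (1 - p) := by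
  have on_window : EqOn (fun s => |s| ^ (-p)) (fun s => s ^ (-p)) (uIcc a b) := fun s hs => by
    rw [uIcc_of_le hab] at hs
    simp only [abs_of_nonneg (ha.trans hs.1)]
  rw [integral_congr on_window, integral_rpow (Or.inl (by linarith)), neg_add_eq_sub]

theorem integral_abs_rpow_neg_of_nonpos_of_nonneg (hp : p < 1) {a b : ℝ} (ha : a ≤ 0)
    (hb : 0 ≤ b) :
    ∫ s in a..b, |s| ^ (-p) = ((-a) ^ (1 - p) + b ^ (1 - p)) / (1 - p) := by
  have reflect : ∫ s in a..0, |s| ^ (-p) = ∫ s in 0..-a, |s| ^ (-p) := by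
    simpa only [abs_neg, neg_zero] using integral_comp_neg (a := a) (b := 0) fun s => |s| ^ (-p)
  rw [← integral_add_adjacent_intervals (intervalIntegrable_abs_rpow_neg hp a 0)
      (intervalIntegrable_abs_rpow_neg hp 0 b), reflect,
    integral_abs_rpow_neg_of_nonneg hp le_rfl (neg_nonneg.2 ha),
    integral_abs_rpow_neg_of_nonneg hp le_rfl hb, Real.zero_rpow (by linarith)]
  ring

theorem integral_abs_rpow_neg_centered (hp : p < 1) {L : ℝ} (hL : 0 ≤ L) :
    ∫ s in -(L / 2)..L / 2, |s| ^ (-p) = L ^ (1 - p) * ∫ s in -(1 / 2)..1 / 2, |s| ^ (-p) := by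
  rw [integral_abs_rpow_neg_of_nonpos_of_nonneg hp (by linarith) (by linarith),
    integral_abs_rpow_neg_of_nonpos_of_nonneg hp (by norm_num) (by norm_num), neg_neg, neg_neg,
    div_eq_mul_one_div L, Real.mul_rpow hL (by norm_num)]
  ring

theorem integral_abs_rpow_neg_centered_pos (hp : p < 1) :
    0 < ∫ s in -(1 / 2)..1 / 2, |s| ^ (-p) := by
  rw [integral_abs_rpow_neg_of_nonpos_of_nonneg hp (by norm_num) (by norm_num)]
  have : 0 < 1 - p := by linarith
  positivity

theorem Real.rpow_add_rpow_le_two_mul_rpow_half {x y t : ℝ} (hx : 0 ≤ x) (hy : 0 ≤ y)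
    (ht₀ : 0 ≤ t) (ht₁ : t ≤ 1) :
    x ^ t + y ^ t ≤ 2 * ((x + y) / 2) ^ t := by
  have := (Real.concaveOn_rpow ht₀ ht₁).2 (mem_Ici.2 hx) (mem_Ici.2 hy)
    (by norm_num : (0 : ℝ) ≤ 1 / 2) (by norm_num : (0 : ℝ) ≤ 1 / 2) (by norm_num)
  simp only [smul_eq_mul] at this
  rw [show 1 / 2 * x + 1 / 2 * y = (x + y) / 2 by ring] at this
  linarith

theorem integral_abs_rpow_neg_le_centered (hp₀ : 0 ≤ p) (hp₁ : p < 1) {L : ℝ} (hL : 0 ≤ L)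
    (a : ℝ) :
    ∫ s in a..a + L, |s| ^ (-p) ≤ ∫ s in -(L / 2)..L / 2, |s| ^ (-p) := by
  -- windows on one side of `0`: subadditivity of `x ↦ x^{1-p}`; windows across `0`: its concavity
  have ht₀ : 0 ≤ 1 - p := by linarith
  have ht₁ : 1 - p ≤ 1 := by linarith
  rw [integral_abs_rpow_neg_of_nonpos_of_nonneg (a := -(L / 2)) (b := L / 2) hp₁ (by linarith)
    (by linarith), neg_neg]
  have half_sum : (L / 2) ^ (1 - p) + (L / 2) ^ (1 - p) = 2 * (L / 2) ^ (1 - p) := by ring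
  have of_nonneg : ∀ a, 0 ≤ a → ∫ s in a..a + L, |s| ^ (-p)
      ≤ ((L / 2) ^ (1 - p) + (L / 2) ^ (1 - p)) / (1 - p) := by
    intro a ha
    rw [integral_abs_rpow_neg_of_nonneg hp₁ ha (by linarith)]
    have subadd := Real.rpow_add_le_add_rpow ha hL ht₀ ht₁
    have := Real.rpow_add_rpow_le_two_mul_rpow_half hL le_rfl ht₀ ht₁
    rw [add_zero, Real.zero_rpow (by linarith), add_zero] at this
    exact div_le_div_of_nonneg_right (by linarith) ht₀
  rcases le_or_gt 0 a with ha | ha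
  · exact of_nonneg a ha
  rcases le_or_gt (a + L) 0 with hb | hb
  · have reflect := integral_comp_neg (a := -(a + L)) (b := -a) fun s => |s| ^ (-p)
    simp only [abs_neg, neg_neg] at reflect
    rw [← reflect, show -a = -(a + L) + L by ring]
    exact of_nonneg _ (by linarith)
  · rw [integral_abs_rpow_neg_of_nonpos_of_nonneg hp₁ ha.le hb.le]
    have := Real.rpow_add_rpow_le_two_mul_rpow_half (neg_nonneg.2 ha.le) hb.le ht₀ ht₁
    rw [neg_add_cancel_left] at this
    exact div_le_div_of_nonneg_right (by linarith) ht₀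

end WindowIntegral

/-- The term of the Morrey supremum of `|s|^{-p/q}` for the time window `[a, a + ρ^α]`. -/
def windowTerm (α q p ρ a : ℝ) : ℝ :=
  ρ * ((ρ ^ α)⁻¹ * ∫ s in a..a + ρ ^ α, |s| ^ (-p)) ^ (1 / q)

theorem windowTerm_le_centered {α q p ρ : ℝ} (hp₀ : 0 ≤ p) (hp₁ : p < 1) (hρ : 0 < ρ)
    (hq : 0 < q) (a : ℝ) :
    windowTerm α q p ρ a ≤ windowTerm α q p ρ (-(ρ ^ α / 2)) := by
  have window_nonneg : 0 ≤ ∫ s in a..a + ρ ^ α, |s| ^ (-p) :=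
    intervalIntegral.integral_nonneg (le_add_of_nonneg_right (by positivity))
      fun s _ => by positivity
  rw [windowTerm, windowTerm, show -(ρ ^ α / 2) + ρ ^ α = ρ ^ α / 2 by ring]
  gcongr
  exact integral_abs_rpow_neg_le_centered hp₀ hp₁ (by positivity) a

/-- Parabolic scaling: the centred window has mass `(ρ^α)^{1 - q/α} = ρ^{α-q}`, so the average is
`ρ^{-q}` times that of the unit window, and its `1/q`-th power cancels the prefactor `ρ`. -/
theorem windowTerm_centered {α q ρ : ℝ} (hα : 0 < α) (hq : 0 < q) (hρ : 0 < ρ)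
    (hp : q / α < 1) :
    windowTerm α q (q / α) ρ (-(ρ ^ α / 2)) =
      (∫ s in -(1 / 2)..1 / 2, |s| ^ (-(q / α))) ^ (1 / q) := by
  have hI := (integral_abs_rpow_neg_centered_pos hp).le
  have scale : (ρ ^ α)⁻¹ * (ρ ^ α) ^ (1 - q / α) = (ρ ^ q)⁻¹ := by
    rw [← Real.rpow_mul hρ.le, ← Real.rpow_neg hρ.le, ← Real.rpow_neg hρ.le, ← Real.rpow_add hρ,
      show -α + α * (1 - q / α) = -q by field_simp; ring]
  rw [windowTerm, show -(ρ ^ α / 2) + ρ ^ α = ρ ^ α / 2 by ring,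
    integral_abs_rpow_neg_centered hp (by positivity), ← mul_assoc, scale,
    Real.mul_rpow (by positivity) hI, Real.inv_rpow (by positivity), ← Real.rpow_mul hρ.le,
    mul_one_div_cancel hq.ne', Real.rpow_one, ← mul_assoc, mul_inv_cancel₀ hρ.ne', one_mul]

theorem cylP_eq_Icc_prod_closedBall (d : ℕ) (α ρ t : ℝ) (x : Spc d) :
    cylP d α ρ t x = Icc t (t + ρ ^ α) ×ˢ Metric.closedBall x ρ := by
  ext z
  simp [cylP, and_assoc]

theorem cylAvg_of_ae_eq_comp_fst {d : ℕ} {α ρ : ℝ} (hρ : 0 < ρ) (t : ℝ) (x : Spc d)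
    {f : ℝ × Spc d → ℝ≥0∞} {g : ℝ → ℝ≥0∞} (hg : Measurable g)
    (hf : f =ᵐ[volume] fun z => g z.1) :
    cylAvg d α ρ t x f = (ENNReal.ofReal (ρ ^ α))⁻¹ * ∫⁻ s in Icc t (t + ρ ^ α), g s := by
  set V := volume (Metric.closedBall x ρ)
  have hV₀ : V ≠ 0 := (Metric.measure_closedBall_pos volume x hρ).ne'
  have hV : V ≠ ∞ := measure_closedBall_lt_top.ne
  have volume_cylP : volume (cylP d α ρ t x) = ENNReal.ofReal (ρ ^ α) * V := by
    rw [cylP_eq_Icc_prod_closedBall, Measure.volume_eq_prod, Measure.prod_prod, Real.volume_Icc,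
      add_sub_cancel_left]
  have lintegral_cylP : ∫⁻ z in cylP d α ρ t x, f z = (∫⁻ s in Icc t (t + ρ ^ α), g s) * V := by
    rw [lintegral_congr_ae (ae_restrict_of_ae hf), cylP_eq_Icc_prod_closedBall,
      Measure.volume_eq_prod,
      setLIntegral_prod (fun z : ℝ × Spc d => g z.1) (hg.comp measurable_fst).aemeasurable]
    simp only [setLIntegral_const]
    exact lintegral_mul_const _ hg
  rw [cylAvg, volume_cylP, lintegral_cylP, ENNReal.mul_inv (Or.inr hV) (Or.inl ofReal_ne_top),
    mul_mul_mul_comm, ENNReal.inv_mul_cancel hV₀ hV, mul_one]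

theorem morreyE_of_ae_eq_comp_fst {d : ℕ} {α q : ℝ} {v : ℝ × Spc d → ℝ≥0∞} {g : ℝ → ℝ≥0∞}
    (hg : Measurable g) (hv : (fun z => v z ^ q) =ᵐ[volume] fun z => g z.1) :
    morreyE d α q v = ⨆ (ρ : ℝ) (_ : 0 < ρ) (t : ℝ), ENNReal.ofReal ρ *
      ((ENNReal.ofReal (ρ ^ α))⁻¹ * ∫⁻ s in Icc t (t + ρ ^ α), g s) ^ (1 / q) := by
  refine iSup_congr fun ρ => iSup_congr fun hρ => iSup_congr fun t => ?_
  simp only [cylAvg_of_ae_eq_comp_fst hρ t _ hg hv, iSup_const]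

theorem lintegral_Icc_ofReal_const_mul_abs_sub_rpow_neg {p : ℝ} (hp : p < 1) (C t₀ a : ℝ)
    {L : ℝ} (hC : 0 ≤ C) (hL : 0 ≤ L) :
    ∫⁻ s in Icc a (a + L), ENNReal.ofReal (C * |s - t₀| ^ (-p)) =
      ENNReal.ofReal (C * ∫ s in a - t₀..a - t₀ + L, |s| ^ (-p)) := by
  have integrable : IntegrableOn (fun s => C * |s - t₀| ^ (-p)) (Icc a (a + L)) := by
    rw [integrableOn_Icc_iff_integrableOn_Ioc,
      ← intervalIntegrable_iff_integrableOn_Ioc_of_le (by linarith)]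
    simpa only [sub_add_cancel] using
      ((intervalIntegrable_abs_rpow_neg hp (a - t₀) (a + L - t₀)).comp_sub_right t₀).const_mul C
  rw [show a - t₀ + L = a + L - t₀ by ring, ← integral_comp_sub_right,
    ← intervalIntegral.integral_const_mul,
    integral_of_le (by linarith), ← integral_Icc_eq_integral_Ioc,
    ofReal_integral_eq_lintegral_ofReal integrable (ae_of_all _ fun s => by positivity)]

theorem ae_drift_rpow_eq {d : ℕ} {α κ t₀ q : ℝ} (hα : 1 < α) (hκ : 0 < κ) (hq : 0 ≤ q)
    {b : ℝ × Spc d → ℝ≥0∞}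
    (hb : ∀ (t : ℝ) (x : Spc d), t ≠ t₀ →
      b (t, x) = ENNReal.ofReal (κ * |t - t₀| ^ (-(α - 1) / α))) :
    (fun z => (b z ^ (1 / (α - 1))) ^ q) =ᵐ[volume]
      fun z => ENNReal.ofReal ((κ ^ (1 / (α - 1))) ^ q * |z.1 - t₀| ^ (-(q / α))) := by
  have off_t₀ : ∀ᵐ z : ℝ × Spc d, z.1 ≠ t₀ := by
    rw [Measure.volume_eq_prod]
    exact Measure.quasiMeasurePreserving_fst.ae (Measure.ae_ne volume t₀)
  filter_upwards [off_t₀] with z hz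
  have hα₁ : 0 < α - 1 := by linarith
  rw [hb z.1 z.2 hz, ← ENNReal.rpow_mul, ENNReal.ofReal_rpow_of_nonneg (by positivity)
      (by positivity), Real.mul_rpow hκ.le (by positivity), ← Real.rpow_mul (abs_nonneg _),
    ← Real.rpow_mul hκ.le]
  congr 3
  field_simp

theorem ofReal_mul_inv_mul_rpow {ρ L X r : ℝ} (hρ : 0 ≤ ρ) (hL : 0 < L) (hX : 0 ≤ X)
    (hr : 0 ≤ r) :
    ENNReal.ofReal ρ * ((ENNReal.ofReal L)⁻¹ * ENNReal.ofReal X) ^ r =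
      ENNReal.ofReal (ρ * (L⁻¹ * X) ^ r) := by
  rw [← ENNReal.ofReal_inv_of_pos hL, ← ENNReal.ofReal_mul (by positivity),
    ENNReal.ofReal_rpow_of_nonneg (by positivity) hr, ← ENNReal.ofReal_mul hρ]

theorem ofReal_mul_average_rpow_eq {ρ α q C p t t₀ : ℝ} (hρ : 0 < ρ) (hq : 0 < q) (hC : 0 ≤ C)
    (hp : p < 1) :
    ENNReal.ofReal ρ * ((ENNReal.ofReal (ρ ^ α))⁻¹ *
      ∫⁻ s in Icc t (t + ρ ^ α), ENNReal.ofReal (C ^ q * |s - t₀| ^ (-p))) ^ (1 / q) =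
        ENNReal.ofReal (C * windowTerm α q p ρ (t - t₀)) := by
  have window_nonneg : 0 ≤ ∫ s in t - t₀..t - t₀ + ρ ^ α, |s| ^ (-p) :=
    intervalIntegral.integral_nonneg (le_add_of_nonneg_right (by positivity))
      fun s _ => by positivity
  rw [lintegral_Icc_ofReal_const_mul_abs_sub_rpow_neg hp _ t₀ t (by positivity) (by positivity),
    ofReal_mul_inv_mul_rpow hρ.le (by positivity) (by positivity) (by positivity), windowTerm,
    mul_left_comm _ (C ^ q), Real.mul_rpow (by positivity) (by positivity), ← Real.rpow_mul hC,
    mul_one_div_cancel hq.ne', Real.rpow_one, mul_left_comm]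

theorem stmt_15_general (α ε : ℝ) (hα1 : 1 < α) (hε1 : 0 < ε) (hε2 : ε < α - 1) :
    ∃ c : ℝ, 0 < c ∧
      ∀ (d : ℕ), 2 ≤ d → ∀ (κ t₀ : ℝ), 0 < κ →
      ∀ (b : ℝ × Spc d → ℝ≥0∞),
        (∀ (t : ℝ) (x : Spc d), t ≠ t₀ →
          b (t, x) = ENNReal.ofReal (κ * |t - t₀| ^ (-(α - 1) / α))) →
        morreyE d α (1 + ε) (fun z => b z ^ (1 / (α - 1))) =
          ENNReal.ofReal (c * κ ^ (1 / (α - 1))) := by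
  set q := 1 + ε
  have hα : 0 < α := by linarith
  have hq : 0 < q := by positivity
  have hp : q / α < 1 := (div_lt_one hα).2 (by linarith)
  refine ⟨(∫ s in -(1 / 2)..1 / 2, |s| ^ (-(q / α))) ^ (1 / q),
    Real.rpow_pos_of_pos (integral_abs_rpow_neg_centered_pos hp) _,
    fun d _ κ t₀ hκ b hb => ?_⟩
  set K := κ ^ (1 / (α - 1))
  have hK : 0 ≤ K := by positivity
  rw [morreyE_of_ae_eq_comp_fst
    (by fun_prop : Measurable fun s => ENNReal.ofReal (K ^ q * |s - t₀| ^ (-(q / α))))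
    (ae_drift_rpow_eq hα1 hκ hq.le hb)]
  refine le_antisymm (iSup₂_le fun ρ hρ => iSup_le fun t => ?_)
    (le_iSup₂_of_le 1 one_pos (le_iSup_of_le (t₀ - 1 / 2) ?_))
  · rw [ofReal_mul_average_rpow_eq hρ hq hK hp, mul_comm, ← windowTerm_centered hα hq hρ hp]
    gcongr
    exact windowTerm_le_centered (by positivity) hp hρ hq _
  · rw [ofReal_mul_average_rpow_eq one_pos hq hK hp, mul_comm,
      ← windowTerm_centered hα hq one_pos hp, Real.one_rpow]
    norm_num

/-- Example (E.1), temporal case: for `b(t,x) = κ |t - t₀|^{-(α-1)/α}`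
(any value at `t = t₀`), the Morrey norm `‖b^{1/(α-1)}‖_{E_{1+ε}}` equals
`c κ^{1/(α-1)}` with `c` depending only on `α` and `ε`. -/
theorem stmt_15 (α ε : ℝ) (hα1 : 1 < α) (hα2 : α < 2) (hε1 : 0 < ε) (hε2 : ε < α - 1) :
    ∃ c : ℝ, 0 < c ∧
      ∀ (d : ℕ), 2 ≤ d → ∀ (κ t₀ : ℝ), 0 < κ →
      ∀ (b : ℝ × Spc d → ℝ≥0∞),
        (∀ (t : ℝ) (x : Spc d), t ≠ t₀ →
          b (t, x) = ENNReal.ofReal (κ * |t - t₀| ^ (-(α - 1) / α))) →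
        morreyE d α (1 + ε) (fun z => b z ^ (1 / (α - 1))) =
          ENNReal.ofReal (c * κ ^ (1 / (α - 1))) :=
  stmt_15_general α ε hα1 hε1 hε2
end
end

section
/- Let d ≥ 2 be an integer, 1 < α < 2, 1 < p < ∞, and let p' = p/(p−1). Let ν > 0 satisfy ν p' < 1, and set γ := (1 − 1/α)(2/p). Then for all measurable b, u : ℝ^{d+1} → [0,∞], ‖P*_γ(b · u^{p−1})‖_{p'}^{p'} ≤ ∫_{ℝ^{d+1}} b^{1−νp'} u^{p} · P_γ[ (P*_γ(b^{1+νp}))^{1/(p−1)} ], where all integrals are understood in [0,∞] (Tonelli). -/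
/-! Reflecting `y`, which `p_γ` does not see, turns `P*_γ` into the convolution `K ⋆ f` with
`K = p_γ`, and `P_γ g (z) = ∫ K(w) g(w + z) dw`. Split
`b u^{p-1} = b^{(1+νp)/p} · b^{(1-νp')/p'} u^{p-1}` and apply Hölder to the measure `K(w) dw`
pointwise in `z`:
`P*_γ(b u^{p-1})^{p'} ≤ P*_γ(b^{1-νp'} u^p) · P*_γ(b^{1+νp})^{p'/p}`, where `p'/p = 1/(p-1)`.
Integrating in `z`, Tonelli and translation invariance move the convolution onto the second
factor. -/

open MeasureTheory ENNReal Set Filter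

noncomputable section

namespace MeasureTheory

variable {α : Type*} [MeasurableSpace α]

theorem lintegral_mul_mul_le_Lp_mul_Lq (μ : Measure α) {p q : ℝ} (hpq : p.HolderConjugate q)
    {w f g : α → ℝ≥0∞} (hw : Measurable w) (hf : Measurable f) (hg : Measurable g) :
    ∫⁻ x, w x * (f x * g x) ∂μ ≤
      (∫⁻ x, w x * f x ^ p ∂μ) ^ (1 / p) * (∫⁻ x, w x * g x ^ q ∂μ) ^ (1 / q) := by
  have hint {h : α → ℝ≥0∞} (hh : Measurable h) :
      ∫⁻ x, w x * h x ∂μ = ∫⁻ x, h x ∂μ.withDensity w :=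
    (lintegral_withDensity_eq_lintegral_mul μ hw hh).symm
  rw [hint (h := fun x => f x * g x) (hf.mul hg), hint (hf.pow_const p), hint (hg.pow_const q)]
  exact ENNReal.lintegral_mul_le_Lp_mul_Lq _ hpq hf.aemeasurable hg.aemeasurable

variable {G : Type*} [MeasurableSpace G] [AddGroup G] [MeasurableAdd₂ G] [MeasurableNeg G]
  {μ : Measure G}

theorem lintegral_lconvolution_mul [SFinite μ] [μ.IsAddLeftInvariant] {K f g : G → ℝ≥0∞}
    (hK : Measurable K) (hf : Measurable f) (hg : Measurable g) :
    ∫⁻ x, (K ⋆ₗ[μ] f) x * g x ∂μ = ∫⁻ x, f x * ∫⁻ y, K y * g (y + x) ∂μ ∂μ :=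
  calc ∫⁻ x, (K ⋆ₗ[μ] f) x * g x ∂μ
      = ∫⁻ x, ∫⁻ y, K y * (f (-y + x) * g x) ∂μ ∂μ := by
        refine lintegral_congr fun x => ?_
        rw [lconvolution_def, ← lintegral_mul_const _ (by fun_prop)]
        simp only [mul_assoc]
    _ = ∫⁻ y, K y * ∫⁻ x, f (-y + x) * g x ∂μ ∂μ := by
        rw [lintegral_lintegral_swap (by fun_prop)]
        exact lintegral_congr fun y => lintegral_const_mul _ (by fun_prop)
    _ = ∫⁻ y, K y * ∫⁻ x, f x * g (y + x) ∂μ ∂μ := by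
        refine lintegral_congr fun y => ?_
        rw [← lintegral_add_left_eq_self _ y]
        simp
    _ = ∫⁻ x, f x * ∫⁻ y, K y * g (y + x) ∂μ ∂μ := by
        have hKg (x : G) : Measurable fun y => K y * g (y + x) := by fun_prop
        have hfg (y : G) : Measurable fun x => f x * g (y + x) := by fun_prop
        simp_rw [← lintegral_const_mul _ (hKg _), ← lintegral_const_mul _ (hfg _)]
        rw [lintegral_lintegral_swap (by fun_prop)]
        simp only [mul_left_comm]

theorem lconvolution_mul_le {p q : ℝ} (hpq : p.HolderConjugate q) {K f g : G → ℝ≥0∞}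
    (hK : Measurable K) (hf : Measurable f) (hg : Measurable g) (x : G) :
    (K ⋆ₗ[μ] (f * g)) x ≤ (K ⋆ₗ[μ] f ^ p) x ^ (1 / p) * (K ⋆ₗ[μ] g ^ q) x ^ (1 / q) :=
  lintegral_mul_mul_le_Lp_mul_Lq μ hpq hK (hf.comp (measurable_neg.add_const x))
    (hg.comp (measurable_neg.add_const x))

theorem lintegral_lconvolution_mul_rpow_le [SFinite μ] [μ.IsAddLeftInvariant] {p q : ℝ}
    (hpq : p.HolderConjugate q) {K f g : G → ℝ≥0∞} (hK : Measurable K) (hf : Measurable f)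
    (hg : Measurable g) :
    ∫⁻ x, (K ⋆ₗ[μ] (f * g)) x ^ q ∂μ ≤
      ∫⁻ x, g x ^ q * ∫⁻ y, K y * (K ⋆ₗ[μ] f ^ p) (y + x) ^ (q / p) ∂μ ∂μ :=
  calc ∫⁻ x, (K ⋆ₗ[μ] (f * g)) x ^ q ∂μ
      ≤ ∫⁻ x, ((K ⋆ₗ[μ] f ^ p) x ^ (1 / p) * (K ⋆ₗ[μ] g ^ q) x ^ (1 / q)) ^ q ∂μ :=
        lintegral_mono fun x =>
          ENNReal.rpow_le_rpow (lconvolution_mul_le hpq hK hf hg x) hpq.symm.nonneg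
    _ = ∫⁻ x, (K ⋆ₗ[μ] g ^ q) x * (K ⋆ₗ[μ] f ^ p) x ^ (q / p) ∂μ := by
        refine lintegral_congr fun x => ?_
        rw [ENNReal.mul_rpow_of_nonneg _ _ hpq.symm.nonneg, ← ENNReal.rpow_mul, ← ENNReal.rpow_mul,
          one_div_mul_cancel hpq.symm.ne_zero, ENNReal.rpow_one, one_div_mul_eq_div, mul_comm]
    _ = ∫⁻ x, g x ^ q * ∫⁻ y, K y * (K ⋆ₗ[μ] f ^ p) (y + x) ^ (q / p) ∂μ ∂μ :=
        lintegral_lconvolution_mul hK (hg.pow_const q)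
          ((measurable_lconvolution μ hK (hf.pow_const p)).pow_const _)

end MeasureTheory

open Function

theorem measurable_uncurry_pKer (d : ℕ) (α γ : ℝ) : Measurable (uncurry (pKer d α γ)) := by
  unfold uncurry pKer
  apply Measurable.ite (measurableSet_lt measurable_const measurable_fst)
  · apply Measurable.ite
    · exact measurableSet_le (measurable_fst.pow measurable_const) measurable_snd.norm
    · exact ((measurable_fst.pow measurable_const).mul
        (measurable_snd.norm.pow measurable_const)).ennreal_ofReal
    · exact (measurable_fst.pow measurable_const).ennreal_ofReal
  · exact measurable_const

theorem pKer_neg (d : ℕ) (α γ s : ℝ) (y : Spc d) : pKer d α γ s (-y) = pKer d α γ s y := by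
  simp only [pKer, norm_neg]

theorem PopStar_eq_lconvolution (d : ℕ) (α γ : ℝ) (f : ℝ × Spc d → ℝ≥0∞) (t : ℝ) (x : Spc d) :
    PopStar d α γ f t x = (uncurry (pKer d α γ) ⋆ₗ f) (t, x) := by
  let reflect : ℝ × Spc d ≃ᵐ ℝ × Spc d := (MeasurableEquiv.refl ℝ).prodCongr (.neg (Spc d))
  have hreflect : MeasurePreserving reflect :=
    (MeasurePreserving.id _).prod (Measure.measurePreserving_neg _)
  rw [lconvolution_def, ← hreflect.lintegral_comp_emb reflect.measurableEmbedding]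
  refine lintegral_congr fun q => ?_
  change _ = pKer d α γ q.1 (-q.2) * f (-(q.1, -q.2) + (t, x))
  simp [pKer_neg, add_comm, sub_eq_add_neg]

theorem Pop_eq_lintegral (d : ℕ) (α γ : ℝ) (g : ℝ × Spc d → ℝ≥0∞) (t : ℝ) (x : Spc d) :
    Pop d α γ g t x = ∫⁻ y, uncurry (pKer d α γ) y * g (y + (t, x)) := by
  refine lintegral_congr fun y => ?_
  rw [add_comm y]
  rfl

theorem stmt_17_general (d : ℕ) (α p ν : ℝ)
    (hp : 1 < p) (hν : 0 < ν) (hνp : ν * (p / (p - 1)) < 1)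
    (b u : ℝ × Spc d → ℝ≥0∞) (hb : Measurable b) (hu : Measurable u) :
    (∫⁻ z : ℝ × Spc d,
        (PopStar d α ((1 - 1 / α) * (2 / p)) (fun w => b w * u w ^ (p - 1)) z.1 z.2)
          ^ (p / (p - 1))) ≤
      ∫⁻ z : ℝ × Spc d,
        b z ^ (1 - ν * (p / (p - 1))) * u z ^ p *
          Pop d α ((1 - 1 / α) * (2 / p))
            (fun w =>
              (PopStar d α ((1 - 1 / α) * (2 / p)) (fun w' => b w' ^ (1 + ν * p)) w.1 w.2)
                ^ (1 / (p - 1))) z.1 z.2 := by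
  set q := p / (p - 1)
  have hpq : p.HolderConjugate q := .conjExponent hp
  have hp0 : 0 < p := hpq.pos
  have hq0 : 0 < q := hpq.symm.pos
  set f := fun w => b w ^ ((1 + ν * p) / p)
  set g := fun w => b w ^ ((1 - ν * q) / q) * u w ^ (p - 1)
  have hsplit : (fun w => b w * u w ^ (p - 1)) = f * g := by
    ext w
    have hexp : (1 + ν * p) / p + (1 - ν * q) / q = 1 := by
      rw [add_div, sub_div, mul_div_cancel_right₀ _ hp0.ne', mul_div_cancel_right₀ _ hq0.ne']
      linarith [hpq.one_div_add_one_div]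
    rw [Pi.mul_apply, ← mul_assoc, ← ENNReal.rpow_add_of_nonneg _ _ (by positivity)
      (div_nonneg (by linarith) hq0.le), hexp, ENNReal.rpow_one]
  have hfp : f ^ p = fun w => b w ^ (1 + ν * p) := by
    ext w
    rw [Pi.pow_apply, ← ENNReal.rpow_mul, div_mul_cancel₀ _ hp0.ne']
  have hgq (w) : g w ^ q = b w ^ (1 - ν * q) * u w ^ p := by
    rw [ENNReal.mul_rpow_of_nonneg _ _ hq0.le, ← ENNReal.rpow_mul, ← ENNReal.rpow_mul,
      div_mul_cancel₀ _ hq0.ne', hpq.sub_one_mul_conj]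
  have hqp : q / p = 1 / (p - 1) := by
    simp only [q]
    field_simp
  have hf : Measurable f := hb.pow_const _
  have hg : Measurable g := (hb.pow_const _).mul (hu.pow_const _)
  -- instance search does not unfold `volume` on a product to `volume.prod volume`
  have : (volume : Measure (ℝ × Spc d)).IsAddLeftInvariant :=
    inferInstanceAs (volume.prod volume).IsAddLeftInvariant
  simp only [PopStar_eq_lconvolution, Pop_eq_lintegral, hsplit, Prod.mk.eta]
  calc _ ≤ _ := lintegral_lconvolution_mul_rpow_le hpq (measurable_uncurry_pKer ..) hf hg
    _ = _ := by simp only [hfp, hgq, hqp]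

/-- the duality/Hölder step (inequality (PP)):
`‖P*_γ(b u^{p-1})‖_{p'}^{p'} ≤ ∫ b^{1-νp'} u^p P_γ[(P*_γ(b^{1+νp}))^{1/(p-1)}]`,
where `γ = (1 - 1/α)(2/p)` and `p' = p/(p-1)`. -/
theorem stmt_17 (d : ℕ) (hd : 2 ≤ d) (α p ν : ℝ) (hα1 : 1 < α) (hα2 : α < 2)
    (hp : 1 < p) (hν : 0 < ν) (hνp : ν * (p / (p - 1)) < 1)
    (b u : ℝ × Spc d → ℝ≥0∞) (hb : Measurable b) (hu : Measurable u) :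
    (∫⁻ z : ℝ × Spc d,
        (PopStar d α ((1 - 1 / α) * (2 / p)) (fun w => b w * u w ^ (p - 1)) z.1 z.2)
          ^ (p / (p - 1))) ≤
      ∫⁻ z : ℝ × Spc d,
        b z ^ (1 - ν * (p / (p - 1))) * u z ^ p *
          Pop d α ((1 - 1 / α) * (2 / p))
            (fun w =>
              (PopStar d α ((1 - 1 / α) * (2 / p)) (fun w' => b w' ^ (1 + ν * p)) w.1 w.2)
                ^ (1 / (p - 1))) z.1 z.2 :=
  stmt_17_general d α p ν hp hν hνp b u hb hu
end
end
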